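/- arXiv:2011.04643 — 9 statements merged into one kernel-verified Lean document; each statement's English description precedes it below -/
import Mathlib

section
/- Let θ, q be real numbers with 0 < θ < 1 and 0 < q < 1. For every nonnegative integer k, the series ∑_{i=k}^∞ C(i,k) q^k (1−q)^{i−k} · θ(1−θ)^i converges and equals (θ/(q+θ(1−q))) · ( q(1−θ)/(q+θ(1−q)) )^k. -/
/-!
The `j`-th term is `θ · C(k + j, k) · (q(1 - θ))^k · r^j` with `r = (1 - q)(1 - θ)`, so the series
is a negative binomial series in `r`; it sums to `θ (q(1 - θ))^k / (1 - r)^(k + 1)`, and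
`1 - r = q + θ(1 - q)`.
-/

theorem hasSum_choose_mul_pow_mul_geometric {𝕜 : Type*} [NormedField 𝕜] [HasSummableGeomSeries 𝕜]
    (k : ℕ) (a : 𝕜) {r : 𝕜} (hr : ‖r‖ < 1) :
    HasSum (fun j : ℕ => ((k + j).choose k : 𝕜) * a ^ k * r ^ j)
      ((a / (1 - r)) ^ k / (1 - r)) := by
  convert! (hasSum_choose_mul_geometric_of_norm_lt_one k hr).mul_left (a ^ k) using 1
  · funext j
    rw [Nat.add_comm k j]
    ring
  · generalize 1 - r = s
    ring

/-- The `q`-thinning of a Geometric(`θ`) distribution: for every `k`, the series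
`∑_{i=k}^∞ C(i,k) q^k (1-q)^{i-k} · θ(1-θ)^i` converges and equals
`(θ/(q+θ(1-q))) · (q(1-θ)/(q+θ(1-q)))^k`.  The series is reindexed by
`i = k + j` with `j` ranging over `ℕ`. -/
theorem geometric_thinning (θ q : ℝ) (hθ0 : 0 < θ) (hθ1 : θ < 1)
    (hq0 : 0 < q) (hq1 : q < 1) (k : ℕ) :
    HasSum
      (fun j : ℕ =>
        ((k + j).choose k : ℝ) * q ^ k * (1 - q) ^ j * (θ * (1 - θ) ^ (k + j)))
      (θ / (q + θ * (1 - q)) * (q * (1 - θ) / (q + θ * (1 - q))) ^ k) := by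
  have hr : ‖(1 - q) * (1 - θ)‖ < 1 := by
    rw [Real.norm_eq_abs, abs_of_nonneg (by nlinarith)]
    nlinarith
  have hsum := (hasSum_choose_mul_pow_mul_geometric k (q * (1 - θ)) hr).mul_left θ
  rw [show 1 - (1 - q) * (1 - θ) = q + θ * (1 - q) by ring] at hsum
  convert! hsum using 1
  · funext j
    rw [mul_pow, mul_pow, pow_add]
    ring
  · ring
end

section
/- Let r ≥ 1 be a real number, 0 < q < 1, and let k ≥ 1 be an integer. Then the series ∑_{i=k}^∞ C(i,k) q^k (1−q)^{i−k} · i^{−(r+1)}/ζ(r+1) converges and equals (1/(ζ(r+1) k!)) · (q/(1−q))^k · ∑_{m=1}^{k} (−1)^{k−m} e_{k−m}(1,2,…,k−1) · Li_{r+1−m}(1−q), where e_j(1,…,k−1) denotes the elementary symmetric polynomial of degree j evaluated at 1,2,…,k−1 (with e_0 = 1). -/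
/-- The polylogarithm `Li_s(x) = ∑_{n=1}^∞ x^n n^{-s}` (real parameters);
the series converges for every real `s` whenever `|x| < 1`. -/
noncomputable def polylog (s x : ℝ) : ℝ :=
  ∑' n : ℕ, x ^ (n + 1) * ((n + 1 : ℝ)) ^ (-s)

/-- The Riemann zeta function for a real argument `s > 1`,
`ζ(s) = ∑_{n=1}^∞ n^{-s}`. -/
noncomputable def zetaReal (s : ℝ) : ℝ :=
  ∑' n : ℕ, ((n + 1 : ℝ)) ^ (-s)

/-- The elementary symmetric polynomial of degree `j` evaluated at the
elements of the finite set `s` of natural numbers (with `e_0 = 1`). -/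
noncomputable def esymEval (j : ℕ) (s : Finset ℕ) : ℝ :=
  ∑ t ∈ s.powersetCard j, ∏ x ∈ t, (x : ℝ)

/-!
Writing `x = 1 - q` and `s = r + 1`, the `j`-th term is `q^k / (ζ(s) k! x^k)` times
`n(n-1)⋯(n-k+1) xⁿ n^{-s}` with `n = k + j`. Expanding the falling factorial in powers of `n`
(Vieta's formulas for the roots `0, 1, …, k-1`) turns the series over all `n ≥ 1` into
`∑_m s(k, m) Li_{s-m}(x)`, and the terms with `n < k` vanish together with the falling factorial.
-/

open Finset Polynomial

lemma prod_sub_natCast_eq_sum_esymEval (s : Finset ℕ) (y : ℝ) :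
    ∏ a ∈ s, (y - a) = ∑ j ∈ range (#s + 1), (-1) ^ j * esymEval j s * y ^ (#s - j) := by
  have h := congrArg (eval y) (Multiset.prod_X_sub_X_eq_sum_esymm (s.val.map (Nat.cast : ℕ → ℝ)))
  simp only [eval_multiset_prod, Multiset.map_map, Function.comp_def, eval_sub, eval_X, eval_C,
    eval_finsetSum, eval_mul, eval_pow, eval_neg, eval_one, Multiset.card_map] at h
  rw [Finset.prod, h]
  refine sum_congr rfl fun j _ => ?_
  rw [esymm_map_val, esymEval, mul_assoc]
  rfl

/-- The signed Stirling number of the first kind `s(k, m)`, for `m ≤ k`. -/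
noncomputable def signedStirlingFirst (k m : ℕ) : ℝ :=
  (-1) ^ (k - m) * esymEval (k - m) (Icc 1 (k - 1))

lemma descPochhammer_eval_eq_sum_signedStirlingFirst {k : ℕ} (hk : 1 ≤ k) (y : ℝ) :
    (descPochhammer ℝ k).eval y = ∑ m ∈ Icc 1 k, signedStirlingFirst k m * y ^ m := by
  obtain ⟨n, rfl⟩ : ∃ n, k = n + 1 := ⟨k - 1, by omega⟩
  have hrange : range (n + 1) = insert 0 (Icc 1 n) := by
    ext t; simp only [mem_range, mem_insert, mem_Icc]; omega
  rw [descPochhammer_eval_eq_prod_range, hrange, prod_insert (by simp),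
    prod_sub_natCast_eq_sum_esymEval, Nat.card_Icc, Nat.add_sub_cancel, mul_sum]
  refine sum_nbij' (fun j => n + 1 - j) (fun m => n + 1 - m) ?_ ?_ ?_ ?_ fun j hj => ?_
  any_goals intro j hj; simp only [mem_range, mem_Icc] at hj ⊢; omega
  rw [mem_range] at hj
  rw [signedStirlingFirst, Nat.add_sub_cancel, Nat.sub_sub_self hj.le,
    show n + 1 - j = (n - j) + 1 by omega]
  push_cast
  ring

lemma summable_pow_mul_rpow {x : ℝ} (hx : ‖x‖ < 1) (s : ℝ) :
    Summable fun n : ℕ => x ^ (n + 1) * ((n + 1 : ℝ)) ^ (-s) := by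
  obtain ⟨K, hK⟩ : ∃ K : ℕ, -s ≤ K := exists_nat_ge (-s)
  have hgeom : Summable fun n : ℕ => ‖((n + 1 : ℕ) : ℝ) ^ K * x ^ (n + 1)‖ :=
    (summable_nat_add_iff 1).mpr (summable_norm_pow_mul_geometric_of_norm_lt_one K hx)
  refine hgeom.of_norm_bounded fun n => ?_
  have hbase : (1 : ℝ) ≤ n + 1 := by linarith [n.cast_nonneg (α := ℝ)]
  have hpow : (n + 1 : ℝ) ^ (-s) ≤ (n + 1 : ℝ) ^ K := by
    rw [← Real.rpow_natCast]; exact Real.rpow_le_rpow_of_exponent_le hbase hK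
  rw [norm_mul, norm_mul, mul_comm]
  gcongr
  rw [Real.norm_of_nonneg (by positivity), Real.norm_of_nonneg (by positivity)]
  exact_mod_cast hpow

lemma hasSum_polylog {x : ℝ} (hx : ‖x‖ < 1) (s : ℝ) :
    HasSum (fun n : ℕ => x ^ (n + 1) * ((n + 1 : ℝ)) ^ (-s)) (polylog s x) :=
  (summable_pow_mul_rpow hx s).hasSum

lemma hasSum_nat_add_iff_of_eq_zero {G : Type*} [AddCommGroup G] [TopologicalSpace G]
    [IsTopologicalAddGroup G] {f : ℕ → G} {a : G} {k : ℕ} (hf : ∀ i < k, f i = 0) :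
    HasSum (fun n => f (n + k)) a ↔ HasSum f a := by
  rw [hasSum_nat_add_iff, sum_eq_zero fun i hi => hf i (mem_range.mp hi), add_zero]

lemma hasSum_descFactorial_mul_pow_mul_rpow {x : ℝ} (hx : ‖x‖ < 1) (s : ℝ) {k : ℕ}
    (hk : 1 ≤ k) :
    HasSum (fun j : ℕ => ((k + j).descFactorial k : ℝ) * x ^ (k + j) * ((k + j : ℕ) : ℝ) ^ (-s))
      (∑ m ∈ Icc 1 k, signedStirlingFirst k m * polylog (s - m) x) := by
  set f : ℕ → ℝ := fun n => (descPochhammer ℝ k).eval (n : ℝ) * x ^ n * (n : ℝ) ^ (-s)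
  have hf_zero : ∀ n < k, f n = 0 := fun n hn => by
    simp only [f, descPochhammer_eval_coe_nat_of_lt hn, zero_mul]
  have hf_succ : HasSum (fun n => f (n + 1))
      (∑ m ∈ Icc 1 k, signedStirlingFirst k m * polylog (s - m) x) := by
    refine (hasSum_sum fun (m : ℕ) _ => (hasSum_polylog hx (s - m)).mul_left _).congr_fun
      fun n => ?_
    have hn : (0 : ℝ) < n + 1 := by positivity
    simp only [f, descPochhammer_eval_eq_sum_signedStirlingFirst hk, sum_mul, Nat.cast_add_one]
    refine sum_congr rfl fun m _ => ?_
    rw [← Real.rpow_natCast (n + 1 : ℝ) m, neg_sub, sub_eq_add_neg, Real.rpow_add hn]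
    ring
  have hf : HasSum f _ :=
    (hasSum_nat_add_iff_of_eq_zero fun i hi => hf_zero i (by omega)).mp hf_succ
  refine ((hasSum_nat_add_iff_of_eq_zero hf_zero).mpr hf).congr_fun fun j => ?_
  simp only [f, add_comm j k, descPochhammer_eval_eq_descFactorial]

theorem zeta_thinning_pos_general (r q : ℝ) (hq0 : 0 < q) (hq1 : q < 1)
    (k : ℕ) (hk : 1 ≤ k) :
    HasSum
      (fun j : ℕ =>
        ((k + j).choose k : ℝ) * q ^ k * (1 - q) ^ j *
          (((k + j : ℕ) : ℝ) ^ (-(r + 1)) / zetaReal (r + 1)))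
      (1 / (zetaReal (r + 1) * (Nat.factorial k : ℝ)) * (q / (1 - q)) ^ k *
        ∑ m ∈ Finset.Icc 1 k,
          (-1 : ℝ) ^ (k - m) * esymEval (k - m) (Finset.Icc 1 (k - 1)) *
            polylog (r + 1 - (m : ℝ)) (1 - q)) := by
  have hx : ‖1 - q‖ < 1 := by rw [Real.norm_eq_abs, abs_lt]; constructor <;> linarith
  have hx0 : 1 - q ≠ 0 := by linarith
  refine ((hasSum_descFactorial_mul_pow_mul_rpow hx (r + 1) hk).mul_left _).congr_fun fun j => ?_
  rw [Nat.descFactorial_eq_factorial_mul_choose, Nat.cast_mul, pow_add, div_pow]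
  field_simp

/-- For the Zeta(`r`) distribution `P_A(i) = i^{-(r+1)}/ζ(r+1)` (`i ≥ 1`) and `k ≥ 1`,
the series `∑_{i=k}^∞ C(i,k) q^k (1-q)^{i-k} · i^{-(r+1)}/ζ(r+1)` converges and equals
`(1/(ζ(r+1) k!)) (q/(1-q))^k ∑_{m=1}^{k} (-1)^{k-m} e_{k-m}(1,…,k-1) Li_{r+1-m}(1-q)`.
The series is reindexed by `i = k + j` with `j` ranging over `ℕ`. -/
theorem zeta_thinning_pos (r q : ℝ) (hr : 1 ≤ r) (hq0 : 0 < q) (hq1 : q < 1)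
    (k : ℕ) (hk : 1 ≤ k) :
    HasSum
      (fun j : ℕ =>
        ((k + j).choose k : ℝ) * q ^ k * (1 - q) ^ j *
          (((k + j : ℕ) : ℝ) ^ (-(r + 1)) / zetaReal (r + 1)))
      (1 / (zetaReal (r + 1) * (Nat.factorial k : ℝ)) * (q / (1 - q)) ^ k *
        ∑ m ∈ Finset.Icc 1 k,
          (-1 : ℝ) ^ (k - m) * esymEval (k - m) (Finset.Icc 1 (k - 1)) *
            polylog (r + 1 - (m : ℝ)) (1 - q)) :=
  zeta_thinning_pos_general r q hq0 hq1 k hk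
end

section
/- Let θ, q be real numbers with 0 < θ < 1 and 0 < q < 1, and let k ≥ 1 be an integer. Then the series ∑_{i=k}^∞ C(i,k) q^k (1−q)^{i−k} · ( −θ^i/(i ln(1−θ)) ) converges and equals −(1/(k ln(1−θ))) · ( qθ/(1−θ(1−q)) )^k. -/
/-!
Since `C(k+j, k) / (k+j) = C(j+k-1, k-1) / k`, pulling `(qθ)^k` out of the `j`-th term leaves
`C(j+k-1, k-1) t^j / k` with `t = θ(1-q)`: a negative binomial series summing to `1 / (k (1-t)^k)`.
-/

theorem Nat.cast_choose_succ_div_eq {K : Type*} [Field K] [CharZero K] (m j : ℕ) :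
    ((m + 1 + j).choose (m + 1) : K) / ((m + 1 + j : ℕ) : K) =
      ((j + m).choose m : K) / (m + 1) := by
  have key := Nat.add_one_mul_choose_eq (m + j) m
  rw [show m + j + 1 = m + 1 + j by omega, add_comm m j] at key
  rw [div_eq_div_iff (Nat.cast_ne_zero.2 (by omega)) (Nat.cast_add_one_ne_zero m)]
  exact_mod_cast key.symm.trans (mul_comm _ _)

theorem hasSum_choose_div_mul_geometric {𝕜 : Type*} [NormedField 𝕜] [CharZero 𝕜] {k : ℕ}
    (hk : 0 < k) {r : 𝕜} (hr : ‖r‖ < 1) :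
    HasSum (fun j : ℕ => ((k + j).choose k : 𝕜) / ((k + j : ℕ) : 𝕜) * r ^ j)
      (1 / (k * (1 - r) ^ k)) := by
  obtain ⟨m, rfl⟩ : ∃ m, k = m + 1 := ⟨k - 1, by omega⟩
  convert (hasSum_choose_mul_geometric_of_norm_lt_one m hr).div_const ((m : 𝕜) + 1) using 1
  · funext j
    rw [Nat.cast_choose_succ_div_eq]
    ring
  · push_cast
    rw [div_div, mul_comm]

/-- For the logarithmic series distribution `P_A(i) = -θ^i/(i ln(1-θ))` (`i ≥ 1`)
and `k ≥ 1`, the series `∑_{i=k}^∞ C(i,k) q^k (1-q)^{i-k} · (-θ^i/(i ln(1-θ)))`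
converges and equals `-(1/(k ln(1-θ))) (qθ/(1-θ(1-q)))^k`.  The series is
reindexed by `i = k + j` with `j` ranging over `ℕ`. -/
theorem logSeries_thinning_pos (θ q : ℝ) (hθ0 : 0 < θ) (hθ1 : θ < 1)
    (hq0 : 0 < q) (hq1 : q < 1) (k : ℕ) (hk : 1 ≤ k) :
    HasSum
      (fun j : ℕ =>
        ((k + j).choose k : ℝ) * q ^ k * (1 - q) ^ j *
          (-(θ ^ (k + j) / (((k + j : ℕ) : ℝ) * Real.log (1 - θ)))))
      (-(1 / ((k : ℝ) * Real.log (1 - θ))) * (q * θ / (1 - θ * (1 - q))) ^ k) := by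
  set c := -(q * θ) ^ k / Real.log (1 - θ)
  have hr : ‖θ * (1 - q)‖ < 1 := by
    rw [Real.norm_of_nonneg (mul_nonneg hθ0.le (by linarith))]
    nlinarith
  have hval : -(1 / ((k : ℝ) * Real.log (1 - θ))) * (q * θ / (1 - θ * (1 - q))) ^ k
      = c * (1 / (k * (1 - θ * (1 - q)) ^ k)) := by
    rw [div_pow]
    ring
  rw [hval]
  refine ((hasSum_choose_div_mul_geometric hk hr).mul_left c).congr_fun fun j => ?_
  rw [pow_add, mul_pow]
  ring
end

section
/- Fix real numbers q ∈ (0,1], μ > 0, p ∈ (0,1), set m = (1+q)μ, and let 𝔹 : ℕ → ℝ. Suppose P : ℕ → ℝ satisfies P(0) = 𝔹(0)/(1+μ(1−p)) and, for k ≥ 1, P(k) = ((p(k−1)+m(1−p))/(1+q+pk+m(1−p))) P(k−1) + ((1+q)𝔹(k))/(1+q+pk+m(1−p)). Then for every k ≥ 0, P(k) = ( Γ(k + m(1−p)/p) / Γ(k + (1+q+p+m(1−p))/p) ) · ∑_{j=0}^{k} ( (1+q) Γ(j + (1+q+p+m(1−p))/p) / ( ((1+q)(1+μ(1−p)) + pj)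 · Γ(j + m(1−p)/p) ) ) · 𝔹(j), where Γ is the Gamma function. -/
/-!
With `A = m(1-p)/p` and `C = (1+q+p+m(1-p))/p` the recurrence reads
`P (k+1) = (k+A)/(k+C) · P k + c (k+1)` with `c j = (1+q) 𝔹 j / ((1+q)(1+μ(1-p)) + p j)`,
and `c 0 = P 0`. Since `Γ(s+1) = s Γ(s)`, the summation factor `w k = Γ(k+C)/Γ(k+A)` satisfies
`w (k+1) (k+A)/(k+C) = w k`, so `w (k+1) P (k+1) = w k P k + w (k+1) c (k+1)` telescopes to
`w k P k = ∑_{j ≤ k} w j c j`.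
-/

open Finset

theorem mul_eq_sum_range_of_recurrence {R : Type*} [CommSemiring R] {w a x c : ℕ → R}
    (hw : ∀ k, w (k + 1) * a k = w k) (h0 : x 0 = c 0)
    (hsucc : ∀ k, x (k + 1) = a k * x k + c (k + 1)) (k : ℕ) :
    w k * x k = ∑ j ∈ range (k + 1), w j * c j := by
  induction k with
  | zero => simp [h0]
  | succ k ih =>
    calc w (k + 1) * x (k + 1) = w (k + 1) * a k * x k + w (k + 1) * c (k + 1) := by
          rw [hsucc]; ring
      _ = ∑ j ∈ range (k + 2), w j * c j := by rw [hw, ih, sum_range_succ _ (k + 1)]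

namespace Real

theorem Gamma_natCast_add_ne_zero {A : ℝ} (hA : ∀ n : ℕ, A ≠ -n) (k : ℕ) :
    Gamma (k + A) ≠ 0 :=
  Gamma_ne_zero fun n h => hA (k + n) (by push_cast; linarith)

theorem eq_Gamma_div_mul_sum_of_recurrence {A C : ℝ} (hA : ∀ n : ℕ, A ≠ -n)
    (hC : ∀ n : ℕ, C ≠ -n) {x c : ℕ → ℝ} (h0 : x 0 = c 0)
    (hsucc : ∀ k : ℕ, x (k + 1) = (k + A) / (k + C) * x k + c (k + 1)) (k : ℕ) :
    x k = Gamma (k + A) / Gamma (k + C) *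
      ∑ j ∈ range (k + 1), Gamma (j + C) / Gamma (j + A) * c j := by
  have hA0 (k : ℕ) : (k : ℝ) + A ≠ 0 := fun h => hA k (by linarith)
  have hC0 (k : ℕ) : (k : ℝ) + C ≠ 0 := fun h => hC k (by linarith)
  have hΓA := Gamma_natCast_add_ne_zero hA
  have hΓC := Gamma_natCast_add_ne_zero hC
  have hw (k : ℕ) : Gamma ((k + 1 : ℕ) + C) / Gamma ((k + 1 : ℕ) + A) * ((k + A) / (k + C)) =
      Gamma (k + C) / Gamma (k + A) := by
    rw [Nat.cast_succ, add_right_comm, add_right_comm _ 1 A, Gamma_add_one (hC0 k),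
      Gamma_add_one (hA0 k)]
    field_simp [hA0 k, hC0 k, hΓA k, hΓC k]
  rw [← mul_eq_sum_range_of_recurrence hw h0 hsucc k]
  field_simp [hΓA k, hΓC k]

end Real

theorem limit_indegree_p_mid_general (q μ p m : ℝ) (hq0 : 0 < q) (hμ : 0 < μ)
    (hp0 : 0 < p) (hp1 : p < 1) (hm : m = (1 + q) * μ) (B P : ℕ → ℝ)
    (h0 : P 0 = B 0 / (1 + μ * (1 - p)))
    (hrec : ∀ k : ℕ, 1 ≤ k →
      P k = (p * ((k : ℝ) - 1) + m * (1 - p)) / (1 + q + p * k + m * (1 - p)) * P (k - 1)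
        + (1 + q) * B k / (1 + q + p * k + m * (1 - p))) :
    ∀ k : ℕ, P k =
      Real.Gamma ((k : ℝ) + m * (1 - p) / p) /
          Real.Gamma ((k : ℝ) + (1 + q + p + m * (1 - p)) / p) *
        ∑ j ∈ Finset.range (k + 1),
          (1 + q) * Real.Gamma ((j : ℝ) + (1 + q + p + m * (1 - p)) / p) /
              (((1 + q) * (1 + μ * (1 - p)) + p * j) *
                Real.Gamma ((j : ℝ) + m * (1 - p) / p)) * B j := by
  subst hm
  have h1p : 0 < 1 - p := sub_pos.2 hp1
  have hA : 0 < (1 + q) * μ * (1 - p) / p := by positivity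
  have hC : 0 < (1 + q + p + (1 + q) * μ * (1 - p)) / p := by positivity
  have ne_neg_natCast {s : ℝ} (hs : 0 < s) (n : ℕ) : s ≠ -n := by
    have := n.cast_nonneg (α := ℝ); linarith
  have hsucc (k : ℕ) : P (k + 1) =
      (k + (1 + q) * μ * (1 - p) / p) / (k + (1 + q + p + (1 + q) * μ * (1 - p)) / p) * P k +
        (1 + q) * B (k + 1) / ((1 + q) * (1 + μ * (1 - p)) + p * (k + 1 : ℕ)) := by
    rw [hrec (k + 1) k.succ_pos, Nat.add_sub_cancel]
    congr 2
    · field_simp; push_cast; ring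
    · push_cast; ring
  have hP0 : P 0 = (1 + q) * B 0 / ((1 + q) * (1 + μ * (1 - p)) + p * (0 : ℕ)) := by
    rw [h0, Nat.cast_zero, mul_zero, add_zero, mul_div_mul_left _ _ (by positivity)]
  intro k
  rw [Real.eq_Gamma_div_mul_sum_of_recurrence (x := P)
    (c := fun j : ℕ => (1 + q) * B j / ((1 + q) * (1 + μ * (1 - p)) + p * j))
    (ne_neg_natCast hA) (ne_neg_natCast hC) hP0 hsucc k]
  congr 1
  refine sum_congr rfl fun j _ => ?_
  rw [mul_comm _ (Real.Gamma _), ← div_div]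
  ring

/-- Closed-form solution of the limit in-degree recurrence for `0 < p < 1`
(mixed attachment): if `P 0 = 𝔹 0/(1+μ(1-p))` and
`P k = ((p(k-1)+m(1-p))/(1+q+pk+m(1-p))) P (k-1) + (1+q)𝔹(k)/(1+q+pk+m(1-p))`
for `k ≥ 1`, where `m = (1+q)μ`, then
`P k = (Γ(k+m(1-p)/p)/Γ(k+(1+q+p+m(1-p))/p)) ·
  ∑_{j=0}^{k} ((1+q)Γ(j+(1+q+p+m(1-p))/p)/(((1+q)(1+μ(1-p))+pj)Γ(j+m(1-p)/p))) 𝔹(j)`. -/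
theorem limit_indegree_p_mid (q μ p m : ℝ) (hq0 : 0 < q) (hq1 : q ≤ 1) (hμ : 0 < μ)
    (hp0 : 0 < p) (hp1 : p < 1) (hm : m = (1 + q) * μ) (B P : ℕ → ℝ)
    (h0 : P 0 = B 0 / (1 + μ * (1 - p)))
    (hrec : ∀ k : ℕ, 1 ≤ k →
      P k = (p * ((k : ℝ) - 1) + m * (1 - p)) / (1 + q + p * k + m * (1 - p)) * P (k - 1)
        + (1 + q) * B k / (1 + q + p * k + m * (1 - p))) :
    ∀ k : ℕ, P k =
      Real.Gamma ((k : ℝ) + m * (1 - p) / p) /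
          Real.Gamma ((k : ℝ) + (1 + q + p + m * (1 - p)) / p) *
        ∑ j ∈ Finset.range (k + 1),
          (1 + q) * Real.Gamma ((j : ℝ) + (1 + q + p + m * (1 - p)) / p) /
              (((1 + q) * (1 + μ * (1 - p)) + p * j) *
                Real.Gamma ((j : ℝ) + m * (1 - p) / p)) * B j :=
  limit_indegree_p_mid_general q μ p m hq0 hμ hp0 hp1 hm B P h0 hrec
end

section
/- Fix a real number q ∈ (0,1], take p = 1, and let 𝔹 : ℕ → ℝ. Suppose P : ℕ → ℝ satisfies P(0) = 𝔹(0) and, for k ≥ 1, P(k) = ((k−1)/(1+q+k)) P(k−1) + (1+q)𝔹(k)/(1+q+k). Then for every k ≥ 1, P(k) = ( (1+q) Γ(k) / Γ(k+q+2) ) · ∑_{j=1}^{k} ( Γ(j+q+2) / ((j+q+1) Γ(j)) ) · 𝔹(j), where Γ is the Gamma function. -/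
/-!
Multiplying the recurrence by the summation factor `w k = Γ(k+q+2)/Γ(k)` turns it into the
telescoping relation `w k P(k) = w (k-1) P(k-1) + (1+q) Γ(k+q+2)/((k+q+1)Γ(k)) 𝔹(k)`, because
`w k (k-1)/(k+q+1) = w (k-1)` by the functional equation of `Γ`. Since `w 0 = 0` (`1/Γ`
vanishes at `0`), the initial value drops out and summing gives the closed form.
-/

open Finset Real

theorem eq_add_sum_Icc_of_eq_add {M : Type*} [AddCommMonoid M] {u f : ℕ → M}
    (h : ∀ k, 1 ≤ k → u k = u (k - 1) + f k) (n : ℕ) :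
    u n = u 0 + ∑ j ∈ Icc 1 n, f j := by
  induction n with
  | zero => simp
  | succ n ih =>
    rw [h (n + 1) (by omega), Nat.add_sub_cancel, ih, sum_Icc_succ_top (by omega), add_assoc]

noncomputable def gammaRatio (a s : ℝ) : ℝ := Gamma (s + a) / Gamma s

@[simp]
theorem gammaRatio_zero (a : ℝ) : gammaRatio a 0 = 0 := by
  simp [gammaRatio, Gamma_zero]

theorem gammaRatio_add_one_mul {a s : ℝ} (hsa : s + a ≠ 0) :
    gammaRatio a (s + 1) * (s / (s + a)) = gammaRatio a s := by
  rcases eq_or_ne s 0 with rfl | hs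
  · simp
  have hnum : Gamma (s + 1 + a) = (s + a) * Gamma (s + a) := by
    rw [add_right_comm, Gamma_add_one hsa]
  rcases eq_or_ne (Gamma s) 0 with hG | hG
  · simp [gammaRatio, Gamma_add_one hs, hG]
  simp only [gammaRatio, hnum, Gamma_add_one hs]
  field_simp

theorem limit_indegree_p_one_general (q : ℝ) (hq0 : 0 < q) (B P : ℕ → ℝ)
    (hrec : ∀ k : ℕ, 1 ≤ k →
      P k = ((k : ℝ) - 1) / (1 + q + k) * P (k - 1) + (1 + q) * B k / (1 + q + k)) :
    ∀ k : ℕ, 1 ≤ k →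
      P k = (1 + q) * Real.Gamma (k : ℝ) / Real.Gamma ((k : ℝ) + q + 2) *
        ∑ j ∈ Finset.Icc 1 k,
          Real.Gamma ((j : ℝ) + q + 2) / (((j : ℝ) + q + 1) * Real.Gamma (j : ℝ)) * B j := by
  set w : ℕ → ℝ := fun k ↦ gammaRatio (q + 2) k
  have htelescope : ∀ k, 1 ≤ k → w k * P k = w (k - 1) * P (k - 1) +
      (1 + q) * (Gamma ((k : ℝ) + q + 2) / (((k : ℝ) + q + 1) * Gamma (k : ℝ)) * B k) := by
    intro k hk
    obtain ⟨n, rfl⟩ : ∃ n, k = n + 1 := ⟨k - 1, by omega⟩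
    have hfactor := gammaRatio_add_one_mul (a := q + 2) (s := n) (by positivity)
    simp only [w, hrec (n + 1) hk, Nat.add_sub_cancel, Nat.cast_add_one, ← hfactor]
    rw [gammaRatio, show (n : ℝ) + 1 + q + 2 = n + 1 + (q + 2) by ring]
    field_simp
    ring
  intro k hk
  have hsum := eq_add_sum_Icc_of_eq_add htelescope k
  simp only [w, gammaRatio_zero, Nat.cast_zero, zero_mul, zero_add, ← mul_sum] at hsum
  calc P k = Gamma k / Gamma (k + q + 2) * (gammaRatio (q + 2) k * P k) := by
        rw [gammaRatio, add_assoc]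
        field_simp
    _ = _ := by rw [hsum]; ring

/-- Closed-form solution of the limit in-degree recurrence for `p = 1`
(pure preferential attachment): if `P 0 = 𝔹 0` and
`P k = ((k-1)/(1+q+k)) P (k-1) + (1+q)𝔹(k)/(1+q+k)` for `k ≥ 1`, then for `k ≥ 1`,
`P k = ((1+q)Γ(k)/Γ(k+q+2)) ∑_{j=1}^{k} (Γ(j+q+2)/((j+q+1)Γ(j))) 𝔹(j)`. -/
theorem limit_indegree_p_one (q : ℝ) (hq0 : 0 < q) (hq1 : q ≤ 1) (B P : ℕ → ℝ)
    (h0 : P 0 = B 0)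
    (hrec : ∀ k : ℕ, 1 ≤ k →
      P k = ((k : ℝ) - 1) / (1 + q + k) * P (k - 1) + (1 + q) * B k / (1 + q + k)) :
    ∀ k : ℕ, 1 ≤ k →
      P k = (1 + q) * Real.Gamma (k : ℝ) / Real.Gamma ((k : ℝ) + q + 2) *
        ∑ j ∈ Finset.Icc 1 k,
          Real.Gamma ((j : ℝ) + q + 2) / (((j : ℝ) + q + 1) * Real.Gamma (j : ℝ)) * B j :=
  limit_indegree_p_one_general q hq0 B P hrec
end

section
/- Fix real numbers q ∈ (0,1], μ > 0, set m = (1+q)μ, take p = 0, and let 𝔹 : ℕ → ℝ. Suppose P : ℕ → ℝ satisfies P(0) = 𝔹(0)/(1+μ) and, for k ≥ 1, P(k) = (m/(1+q+m)) P(k−1) + (1+q)𝔹(k)/(1+q+m). Define the complementary cumulative distribution F(k) = 1 − ∑_{i=0}^{k−1} P(i). Then for every k ≥ 1, F(k) = 1 − (1/(1+μ)) ∑_{i=0}^{k−1} ∑_{j=0}^{i} 𝔹(j) (μ/(1+μ))^{i−j}. -/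
open Finset

theorem eq_mul_sum_mul_pow_of_linear_rec {R : Type*} [CommSemiring R] (r c : R) (B P : ℕ → R)
    (h0 : P 0 = c * B 0) (hsucc : ∀ k, P (k + 1) = r * P k + c * B (k + 1)) (k : ℕ) :
    P k = c * ∑ j ∈ range (k + 1), B j * r ^ (k - j) := by
  induction k with
  | zero => simp [h0]
  | succ n ih =>
    have shift : ∀ j ∈ range (n + 1), B j * r ^ (n + 1 - j) = r * (B j * r ^ (n - j)) := by
      intro j hj
      rw [Nat.sub_add_comm (Nat.lt_succ_iff.mp (mem_range.mp hj)), pow_succ]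
      ring
    rw [hsucc, ih, sum_range_succ _ (n + 1), sum_congr rfl shift, ← mul_sum, Nat.sub_self,
      pow_zero, mul_one]
    ring

theorem ccdf_p_zero_general (q μ m : ℝ) (hq0 : 0 < q) (hμ : 0 < μ)
    (hm : m = (1 + q) * μ) (B P : ℕ → ℝ)
    (h0 : P 0 = B 0 / (1 + μ))
    (hrec : ∀ k : ℕ, 1 ≤ k →
      P k = m / (1 + q + m) * P (k - 1) + (1 + q) * B k / (1 + q + m))
    (F : ℕ → ℝ) (hF : ∀ k : ℕ, F k = 1 - ∑ i ∈ Finset.range k, P i) :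
    ∀ k : ℕ, 1 ≤ k →
      F k = 1 - (1 / (1 + μ)) *
        ∑ i ∈ Finset.range k, ∑ j ∈ Finset.range (i + 1),
          B j * (μ / (1 + μ)) ^ (i - j) := by
  have hq : (1 : ℝ) + q ≠ 0 := by positivity
  have hμ' : (1 : ℝ) + μ ≠ 0 := by positivity
  have hdenom : 1 + q + m = (1 + q) * (1 + μ) := by rw [hm]; ring
  have hsucc : ∀ k, P (k + 1) = μ / (1 + μ) * P k + 1 / (1 + μ) * B (k + 1) := by
    intro k
    rw [hrec (k + 1) k.succ_pos, Nat.add_sub_cancel, hdenom, hm]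
    field_simp
  have hP := eq_mul_sum_mul_pow_of_linear_rec _ _ B P (by rw [h0, one_div_mul_eq_div]) hsucc
  intro k _
  rw [hF, mul_sum]
  exact congrArg _ (sum_congr rfl fun i _ => hP i)

/-- Closed form of the complementary cumulative in-degree distribution for `p = 0`:
with `P` satisfying the limit recurrence and `F k = 1 - ∑_{i=0}^{k-1} P i`, for
every `k ≥ 1`, `F k = 1 - (1/(1+μ)) ∑_{i=0}^{k-1} ∑_{j=0}^{i} 𝔹(j) (μ/(1+μ))^{i-j}`. -/
theorem ccdf_p_zero (q μ m : ℝ) (hq0 : 0 < q) (hq1 : q ≤ 1) (hμ : 0 < μ)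
    (hm : m = (1 + q) * μ) (B P : ℕ → ℝ)
    (h0 : P 0 = B 0 / (1 + μ))
    (hrec : ∀ k : ℕ, 1 ≤ k →
      P k = m / (1 + q + m) * P (k - 1) + (1 + q) * B k / (1 + q + m))
    (F : ℕ → ℝ) (hF : ∀ k : ℕ, F k = 1 - ∑ i ∈ Finset.range k, P i) :
    ∀ k : ℕ, 1 ≤ k →
      F k = 1 - (1 / (1 + μ)) *
        ∑ i ∈ Finset.range k, ∑ j ∈ Finset.range (i + 1),
          B j * (μ / (1 + μ)) ^ (i - j) :=
  ccdf_p_zero_general q μ m hq0 hμ hm B P h0 hrec F hF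
end

section
/- Fix real numbers q ∈ (0,1], μ > 0, p ∈ (0,1), set m = (1+q)μ, and let 𝔹 : ℕ → ℝ. Suppose P : ℕ → ℝ satisfies P(0) = 𝔹(0)/(1+μ(1−p)) and, for k ≥ 1, P(k) = ((p(k−1)+m(1−p))/(1+q+pk+m(1−p))) P(k−1) + ((1+q)𝔹(k))/(1+q+pk+m(1−p)). Define F(k) = 1 − ∑_{i=0}^{k−1} P(i). Then for every k ≥ 1, F(k) = 1 − ∑_{i=0}^{k−1} ∑_{j=0}^{i} ( (1+q) B(i + m(1−p)/p, (1+q+p)/p) / ( (1+q+pj+m(1−p)) · B(j + m(1−p)/p, (1+q+p)/p) ) ) · 𝔹(j), where B(x,y) = Γ(x)Γ(y)/Γ(x+y) denotes the Beta function. -/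
/-!
`B(x + 1, y) = x / (x + y) · B(x, y)`, so with `a = m(1-p)/p`, `b = (1+q+p)/p` the coefficient of
`P(k-1)` in the recurrence is the ratio `w k / w (k-1)` of `w j = B(j + a, b)`. Dividing the
recurrence by `w k` turns it into a telescoping sum, which gives
`P i = ∑_{j ≤ i} (w i / w j) · (1+q) 𝔹(j) / (1+q+pj+m(1-p))`; summing over `i < k` gives
`F k`.
-/

/-- The Beta function `B(x,y) = Γ(x)Γ(y)/Γ(x+y)`. -/
noncomputable def betaFn (x y : ℝ) : ℝ :=
  Real.Gamma x * Real.Gamma y / Real.Gamma (x + y)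

lemma betaFn_pos {x y : ℝ} (hx : 0 < x) (hy : 0 < y) : 0 < betaFn x y :=
  div_pos (mul_pos (Real.Gamma_pos_of_pos hx) (Real.Gamma_pos_of_pos hy))
    (Real.Gamma_pos_of_pos (add_pos hx hy))

lemma betaFn_add_one {x y : ℝ} (hx : x ≠ 0) (hxy : x + y ≠ 0) :
    betaFn (x + 1) y = x / (x + y) * betaFn x y := by
  unfold betaFn
  rw [Real.Gamma_add_one hx, add_right_comm, Real.Gamma_add_one hxy]
  field_simp

lemma eq_sum_range_div_mul_of_recurrence {K : Type*} [Field K] {x w e : ℕ → K}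
    (hw : ∀ k, w k ≠ 0) (h0 : x 0 = e 0)
    (hsucc : ∀ k, x (k + 1) = w (k + 1) / w k * x k + e (k + 1))
    (n : ℕ) : x n = ∑ j ∈ Finset.range (n + 1), w n / w j * e j := by
  induction n with
  | zero => simp [h0, hw 0]
  | succ n ih =>
    rw [hsucc, ih, Finset.mul_sum, Finset.sum_range_succ _ (n + 1), div_self (hw _), one_mul]
    congr 1
    refine Finset.sum_congr rfl fun j _ => ?_
    rw [← mul_assoc, div_mul_div_cancel₀ (hw n)]

theorem ccdf_p_mid_general (q μ p m : ℝ) (hq0 : 0 < q) (hμ : 0 < μ)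
    (hp0 : 0 < p) (hp1 : p < 1) (hm : m = (1 + q) * μ) (B P : ℕ → ℝ)
    (h0 : P 0 = B 0 / (1 + μ * (1 - p)))
    (hrec : ∀ k : ℕ, 1 ≤ k →
      P k = (p * ((k : ℝ) - 1) + m * (1 - p)) / (1 + q + p * k + m * (1 - p)) * P (k - 1)
        + (1 + q) * B k / (1 + q + p * k + m * (1 - p)))
    (F : ℕ → ℝ) (hF : ∀ k : ℕ, F k = 1 - ∑ i ∈ Finset.range k, P i) :
    ∀ k : ℕ, 1 ≤ k →
      F k = 1 -
        ∑ i ∈ Finset.range k, ∑ j ∈ Finset.range (i + 1),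
          (1 + q) * betaFn ((i : ℝ) + m * (1 - p) / p) ((1 + q + p) / p) /
              ((1 + q + p * j + m * (1 - p)) *
                betaFn ((j : ℝ) + m * (1 - p) / p) ((1 + q + p) / p)) * B j := by
  intro k _
  set a := m * (1 - p) / p with ha_def
  set b := (1 + q + p) / p with hb_def
  have ha : 0 < a := by
    have : 0 < m := hm ▸ by positivity
    have : 0 < 1 - p := sub_pos.2 hp1
    positivity
  have hb : 0 < b := by positivity
  have hw : ∀ j : ℕ, betaFn (j + a) b ≠ 0 := fun j => (betaFn_pos (by positivity) hb).ne'
  have hratio : ∀ j : ℕ, betaFn ((j + 1 : ℕ) + a) b / betaFn (j + a) b =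
      (p * (((j + 1 : ℕ) : ℝ) - 1) + m * (1 - p)) /
        (1 + q + p * (j + 1 : ℕ) + m * (1 - p)) := by
    intro j
    rw [Nat.cast_succ, add_right_comm, betaFn_add_one (by positivity) (by positivity),
      mul_div_cancel_right₀ _ (hw j), ha_def, hb_def]
    field_simp
    ring
  have hP0 : P 0 = (1 + q) * B 0 / (1 + q + p * (0 : ℕ) + m * (1 - p)) := by
    rw [h0, ← mul_div_mul_left (B 0) _ (by positivity : (1 + q : ℝ) ≠ 0), hm, Nat.cast_zero]
    congr 1
    ring
  have hP := eq_sum_range_div_mul_of_recurrence (x := P)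
    (e := fun j => (1 + q) * B j / (1 + q + p * j + m * (1 - p))) hw hP0
    (fun j => by rw [hrec (j + 1) j.succ_pos, hratio, Nat.add_sub_cancel])
  rw [hF]
  congr 1
  refine Finset.sum_congr rfl fun i _ => ?_
  rw [hP]
  refine Finset.sum_congr rfl fun j _ => ?_
  rw [div_mul_div_comm, mul_comm (betaFn (j + a) b)]
  ring

/-- Closed form of the complementary cumulative in-degree distribution for
`0 < p < 1`: with `P` satisfying the limit recurrence and
`F k = 1 - ∑_{i=0}^{k-1} P i`, for every `k ≥ 1`,
`F k = 1 - ∑_{i=0}^{k-1} ∑_{j=0}^{i}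
  ((1+q)B(i+m(1-p)/p,(1+q+p)/p)/((1+q+pj+m(1-p))B(j+m(1-p)/p,(1+q+p)/p))) 𝔹(j)`. -/
theorem ccdf_p_mid (q μ p m : ℝ) (hq0 : 0 < q) (hq1 : q ≤ 1) (hμ : 0 < μ)
    (hp0 : 0 < p) (hp1 : p < 1) (hm : m = (1 + q) * μ) (B P : ℕ → ℝ)
    (h0 : P 0 = B 0 / (1 + μ * (1 - p)))
    (hrec : ∀ k : ℕ, 1 ≤ k →
      P k = (p * ((k : ℝ) - 1) + m * (1 - p)) / (1 + q + p * k + m * (1 - p)) * P (k - 1)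
        + (1 + q) * B k / (1 + q + p * k + m * (1 - p)))
    (F : ℕ → ℝ) (hF : ∀ k : ℕ, F k = 1 - ∑ i ∈ Finset.range k, P i) :
    ∀ k : ℕ, 1 ≤ k →
      F k = 1 -
        ∑ i ∈ Finset.range k, ∑ j ∈ Finset.range (i + 1),
          (1 + q) * betaFn ((i : ℝ) + m * (1 - p) / p) ((1 + q + p) / p) /
              ((1 + q + p * j + m * (1 - p)) *
                betaFn ((j : ℝ) + m * (1 - p) / p) ((1 + q + p) / p)) * B j :=
  ccdf_p_mid_general q μ p m hq0 hμ hp0 hp1 hm B P h0 hrec F hF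
end

section
/- Let c > 0 and b be real numbers and n₀ ≥ 1 an integer. Suppose (x_t)_{t≥0} is a real sequence satisfying x_t = (1 − c/(n₀+t)) x_{t−1} + b/(n₀+t) for all t ≥ 1. Then x_t → b/c as t → ∞, regardless of the initial value x_0. -/
/-!
The error `x t - b / c` is multiplied by `1 - c / (n₀ + t)` at each step. Once these factors are
nonnegative, `1 - u ≤ exp (-u)` bounds the error by `exp (-c ∑ 1 / (n₀ + t))`, which tends to `0`
because the harmonic series diverges.
-/

open Filter Topology Finset

theorem abs_le_mul_exp_neg_sum_of_eq_one_sub_mul {e a : ℕ → ℝ} (ha : ∀ k, a k ≤ 1)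
    (he : ∀ k, e (k + 1) = (1 - a k) * e k) (n : ℕ) :
    |e n| ≤ |e 0| * Real.exp (-∑ i ∈ range n, a i) := by
  induction n with
  | zero => simp
  | succ n ih =>
    calc |e (n + 1)| = (1 - a n) * |e n| := by
          rw [he, abs_mul, abs_of_nonneg (sub_nonneg.2 (ha n))]
      _ ≤ Real.exp (-a n) * (|e 0| * Real.exp (-∑ i ∈ range n, a i)) :=
          mul_le_mul (by linarith [Real.add_one_le_exp (-a n)]) ih (abs_nonneg _)
            (Real.exp_pos _).le
      _ = |e 0| * Real.exp (-∑ i ∈ range (n + 1), a i) := by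
          rw [sum_range_succ, neg_add, Real.exp_add]
          ring

theorem tendsto_zero_of_eq_one_sub_mul {e a : ℕ → ℝ} (ha₀ : ∀ k, 0 ≤ a k) (ha₁ : ∀ k, a k ≤ 1)
    (hdiv : ¬Summable a) (he : ∀ k, e (k + 1) = (1 - a k) * e k) :
    Tendsto e atTop (𝓝 0) := by
  have hsum : Tendsto (fun n ↦ ∑ i ∈ range n, a i) atTop atTop :=
    (not_summable_iff_tendsto_nat_atTop_of_nonneg ha₀).1 hdiv
  have hbound : Tendsto (fun n ↦ |e 0| * Real.exp (-∑ i ∈ range n, a i)) atTop (𝓝 0) := by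
    simpa using (Real.tendsto_exp_atBot.comp (tendsto_neg_atTop_atBot.comp hsum)).const_mul |e 0|
  exact squeeze_zero_norm (abs_le_mul_exp_neg_sum_of_eq_one_sub_mul ha₁ he) hbound

theorem not_summable_div_natCast_add {c : ℝ} (hc : c ≠ 0) (m : ℕ) :
    ¬Summable (fun k : ℕ ↦ c / ((k + m : ℕ) : ℝ)) := by
  simp_rw [div_eq_mul_one_div c]
  rw [summable_mul_left_iff hc, summable_nat_add_iff m (f := fun n : ℕ ↦ 1 / (n : ℝ))]
  exact Real.not_summable_one_div_natCast

theorem recurrence_limit_base_general (c b : ℝ) (hc : 0 < c) (n₀ : ℕ)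
    (x : ℕ → ℝ)
    (h : ∀ t : ℕ, 1 ≤ t →
      x t = (1 - c / ((n₀ : ℝ) + t)) * x (t - 1) + b / ((n₀ : ℝ) + t)) :
    Tendsto x atTop (nhds (b / c)) := by
  have herr : ∀ t : ℕ, x (t + 1) - b / c = (1 - c / ((t + (n₀ + 1) : ℕ) : ℝ)) * (x t - b / c) := by
    intro t
    have hpos : (0 : ℝ) < n₀ + (t + 1 : ℕ) := by positivity
    rw [h (t + 1) t.succ_pos, Nat.add_sub_cancel, add_left_comm t, Nat.cast_add n₀]
    field_simp
    ring
  -- shifting by `N ≥ c` makes every contraction factor `1 - c / (n₀ + t + 1)` nonnegative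
  set N := ⌈c⌉₊
  set a : ℕ → ℝ := fun k ↦ c / ((k + (N + (n₀ + 1)) : ℕ) : ℝ)
  have ha₀ : ∀ k, 0 ≤ a k := fun k ↦ by positivity
  have ha₁ : ∀ k, a k ≤ 1 := fun k ↦ by
    refine div_le_one_of_le₀ ((Nat.le_ceil c).trans ?_) (Nat.cast_nonneg _)
    exact_mod_cast (by omega : N ≤ k + (N + (n₀ + 1)))
  have hshift : Tendsto (fun k ↦ x (k + N) - b / c) atTop (𝓝 0) :=
    tendsto_zero_of_eq_one_sub_mul ha₀ ha₁ (not_summable_div_natCast_add hc.ne' _) fun k ↦ by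
      rw [add_right_comm, herr, add_assoc k]
  exact (tendsto_add_atTop_iff_nat N).1 (tendsto_sub_nhds_zero_iff.1 hshift)

/-- Base case of Theorem 3.2: if `x_t = (1 - c/(n₀+t)) x_{t-1} + b/(n₀+t)`
for all `t ≥ 1`, with `c > 0` and integer `n₀ ≥ 1`, then `x_t → b/c` as
`t → ∞`, regardless of the initial value `x_0`. -/
theorem recurrence_limit_base (c b : ℝ) (hc : 0 < c) (n₀ : ℕ) (hn₀ : 1 ≤ n₀)
    (x : ℕ → ℝ)
    (h : ∀ t : ℕ, 1 ≤ t →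
      x t = (1 - c / ((n₀ : ℝ) + t)) * x (t - 1) + b / ((n₀ : ℝ) + t)) :
    Tendsto x atTop (nhds (b / c)) :=
  recurrence_limit_base_general c b hc n₀ x h
end

section
/- Let (a_t)_{t≥1} and (b_t)_{t≥1} be real sequences with a_t → a for some a > 0 and b_t → b. Suppose (x_t)_{t≥0} is a real sequence satisfying x_t = (1 − a_t/t) x_{t−1} + b_t/t for all t ≥ 1. Then x_t → b/a as t → ∞, regardless of the initial value x_0. -/
/-!
Centre the sequence at `b / a`: `y t = x t - b / a` satisfies
`y t = (1 - a_t / t) y (t-1) + c_t / t` with `c_t = b_t - a_t b / a → 0`. Once `a_t ≥ a / 2` and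
`|c_t|` is small, `|y|` is pushed towards a small level `δ` at relative rate `a / (2t)`. The excess
over `δ` therefore decays like `∏ (1 - a / (2t)) ≤ exp (-(a / 2) ∑ 1 / t)`, which tends to zero
because the harmonic series diverges.
-/

open Filter Topology Finset

theorem le_exp_neg_sum_mul_of_le_one_sub_mul {w r : ℕ → ℝ} (hw0 : 0 ≤ w 0) (hr : ∀ n, r n ≤ 1)
    (hw : ∀ n, w (n + 1) ≤ (1 - r n) * w n) (n : ℕ) :
    w n ≤ Real.exp (-∑ i ∈ range n, r i) * w 0 := by
  induction n with
  | zero => simp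
  | succ n ih =>
    have hpos : 0 ≤ Real.exp (-∑ i ∈ range n, r i) * w 0 := by positivity
    calc w (n + 1) ≤ (1 - r n) * w n := hw n
      _ ≤ (1 - r n) * (Real.exp (-∑ i ∈ range n, r i) * w 0) :=
        mul_le_mul_of_nonneg_left ih (sub_nonneg.2 (hr n))
      _ ≤ Real.exp (-r n) * (Real.exp (-∑ i ∈ range n, r i) * w 0) :=
        mul_le_mul_of_nonneg_right (Real.one_sub_le_exp_neg _) hpos
      _ = Real.exp (-∑ i ∈ range (n + 1), r i) * w 0 := by
        rw [sum_range_succ, ← mul_assoc, ← Real.exp_add]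
        ring_nf

theorem tendsto_zero_of_le_one_sub_mul {w r : ℕ → ℝ} (hw0 : ∀ n, 0 ≤ w n) (hr0 : ∀ n, 0 ≤ r n)
    (hr1 : ∀ n, r n ≤ 1) (hr : ¬Summable r) (hw : ∀ n, w (n + 1) ≤ (1 - r n) * w n) :
    Tendsto w atTop (𝓝 0) := by
  have hsum := (not_summable_iff_tendsto_nat_atTop_of_nonneg hr0).1 hr
  have hbound := (Real.tendsto_exp_neg_atTop_nhds_zero.comp hsum).mul_const (w 0)
  rw [zero_mul] at hbound
  exact squeeze_zero hw0 (le_exp_neg_sum_mul_of_le_one_sub_mul (hw0 0) hr1 hw) hbound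

theorem tendsto_zero_of_le_one_sub_mul_add {u r : ℕ → ℝ} (hu : ∀ n, 0 ≤ u n)
    (hr0 : ∀ n, 0 ≤ r n) (hr1 : ∀ᶠ n in atTop, r n ≤ 1) (hr : ¬Summable r)
    (h : ∀ δ > 0, ∀ᶠ n in atTop, u (n + 1) ≤ (1 - r n) * u n + δ * r n) :
    Tendsto u atTop (𝓝 0) := by
  refine tendsto_order.2 ⟨fun ε hε => .of_forall fun n => hε.trans_le (hu n), fun ε hε => ?_⟩
  obtain ⟨T, hT⟩ := (hr1.and (h (ε / 2) (by positivity))).exists_forall_of_atTop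
  have hexcess : Tendsto (fun n => max (u (n + T) - ε / 2) 0) atTop (𝓝 0) := by
    refine tendsto_zero_of_le_one_sub_mul (r := fun n => r (n + T)) (fun n => le_max_right _ _)
      (fun n => hr0 _) (fun n => (hT _ (Nat.le_add_left T n)).1)
      ((summable_nat_add_iff T).not.2 hr) fun n => ?_
    obtain ⟨hrT, hstep⟩ := hT (n + T) (Nat.le_add_left T n)
    rw [Nat.add_right_comm]
    refine max_le ?_ (mul_nonneg (sub_nonneg.2 hrT) (le_max_right _ _))
    calc u (n + T + 1) - ε / 2 ≤ (1 - r (n + T)) * (u (n + T) - ε / 2) := by linarith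
      _ ≤ (1 - r (n + T)) * max (u (n + T) - ε / 2) 0 :=
        mul_le_mul_of_nonneg_left (le_max_left _ _) (sub_nonneg.2 hrT)
  have hexcess' := (tendsto_add_atTop_iff_nat (f := fun n => max (u n - ε / 2) 0) T).1 hexcess
  filter_upwards [hexcess'.eventually_lt_const (half_pos hε)] with n hn
  linarith [le_max_left (u n - ε / 2) 0]

theorem abs_one_sub_div_mul_add_div_le {s p q y α δ : ℝ} (hs : 0 < s) (hαp : α ≤ p)
    (hps : p ≤ s) (hq : |q| ≤ δ * α) :
    |(1 - p / s) * y + q / s| ≤ (1 - α / s) * |y| + δ * (α / s) := by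
  have hcoef : 0 ≤ 1 - p / s := sub_nonneg.2 ((div_le_one hs).2 hps)
  have hαs : α / s ≤ p / s := div_le_div_of_nonneg_right hαp hs.le
  calc |(1 - p / s) * y + q / s| ≤ |(1 - p / s) * y| + |q / s| := abs_add_le _ _
    _ = (1 - p / s) * |y| + |q| / s := by rw [abs_mul, abs_of_nonneg hcoef, abs_div, abs_of_pos hs]
    _ ≤ (1 - α / s) * |y| + δ * α / s := by gcongr
    _ = (1 - α / s) * |y| + δ * (α / s) := by ring

/-- Asymptotic lemma for the inductive step of Theorem 3.2 (analogue of
Lemma 2 of Ruiz 2018): if `a_t → a > 0`, `b_t → b`, and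
`x_t = (1 - a_t/t) x_{t-1} + b_t/t` for all `t ≥ 1`, then `x_t → b/a`,
regardless of the initial value `x_0`. -/
theorem recurrence_limit_general (a b : ℝ) (ha : 0 < a) (aseq bseq : ℕ → ℝ)
    (hA : Tendsto aseq atTop (nhds a)) (hB : Tendsto bseq atTop (nhds b))
    (x : ℕ → ℝ)
    (h : ∀ t : ℕ, 1 ≤ t →
      x t = (1 - aseq t / (t : ℝ)) * x (t - 1) + bseq t / (t : ℝ)) :
    Tendsto x atTop (nhds (b / a)) := by
  set c : ℕ → ℝ := fun t => bseq t - aseq t * (b / a)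
  have hc : Tendsto c atTop (𝓝 0) := by
    simpa [mul_div_cancel₀ b ha.ne'] using hB.sub (hA.mul_const (b / a))
  have hrec (n : ℕ) : x (n + 1) - b / a =
      (1 - aseq (n + 1) / ↑(n + 1)) * (x n - b / a) + c (n + 1) / ↑(n + 1) := by
    rw [h (n + 1) (Nat.le_add_left 1 n), Nat.add_sub_cancel]
    simp only [c]
    field_simp
    ring
  rw [← tendsto_sub_nhds_zero_iff, tendsto_zero_iff_abs_tendsto_zero]
  refine tendsto_zero_of_le_one_sub_mul_add (r := fun n => a / 2 / ↑(n + 1))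
    (fun n => abs_nonneg _) (fun n => by positivity) ?_ ?_ fun δ hδ => ?_
  · filter_upwards [tendsto_natCast_atTop_atTop.eventually_ge_atTop (a / 2)] with n hn
    exact (div_le_one (by positivity)).2 (hn.trans (by push_cast; linarith))
  · have hharmonic : ¬Summable fun n : ℕ => a / 2 * (1 / (n : ℝ)) :=
      (summable_mul_left_iff (by positivity)).not.2 Real.not_summable_one_div_natCast
    simp only [← div_eq_mul_one_div] at hharmonic
    exact (summable_nat_add_iff 1).not.2 hharmonic
  · have hev : ∀ᶠ t in atTop, a / 2 ≤ aseq t ∧ aseq t ≤ t ∧ |c t| ≤ δ * (a / 2) := by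
      filter_upwards [hA.eventually_const_le (half_lt_self ha),
        hA.eventually_le_const (lt_add_one a),
        tendsto_natCast_atTop_atTop.eventually_ge_atTop (a + 1),
        (hc.abs.eventually_le_const (by rw [abs_zero]; positivity : |(0 : ℝ)| < δ * (a / 2)))]
        with t hlo hhi ht hct
      exact ⟨hlo, hhi.trans ht, hct⟩
    filter_upwards [(tendsto_add_atTop_nat 1).eventually hev] with n ⟨hlo, hhi, hct⟩
    rw [Function.comp_apply, Function.comp_apply, hrec n]
    exact abs_one_sub_div_mul_add_div_le (by positivity) hlo hhi hct
end
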